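/- arXiv:2401.07616 — 6 statements merged into one kernel-verified Lean document; each statement's English description precedes it below -/
import Mathlib

section
/- Let Σ be a finite type and L ⊆ (ℕ → Σ) a language of ω-words. There exists a Kripke structure with labels in Σ whose trace language equals L if and only if L is closed and ω-regular. -/
/-- A Büchi automaton over alphabet `α`: finite state type, nondeterministic
transition function, initial state, and accepting set. -/
structure BuchiAutomaton (α : Type) where
  Q : Type
  [finQ : Fintype Q]
  δ : Q → α → Set Q
  init : Q
  F : Set Q

/-- The ω-language of a Büchi automaton: words admitting an accepting run. -/
def BuchiAutomaton.Lang {α : Type} (A : BuchiAutomaton α) : Set (ℕ → α) :=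
  {w | ∃ r : ℕ → A.Q, r 0 = A.init ∧ (∀ k, r (k + 1) ∈ A.δ (r k) (w k)) ∧
        {k | r k ∈ A.F}.Infinite}

/-- A Kripke structure with labels in `α`: finite state type, transition
relation, initial states, and labeling. -/
structure KripkeStructure (α : Type) where
  S : Type
  [finS : Fintype S]
  R : S → S → Prop
  I : Set S
  label : S → α

/-- The trace language of a Kripke structure: labelings of infinite executions. -/
def KripkeStructure.Traces {α : Type} (K : KripkeStructure α) : Set (ℕ → α) :=
  {x | ∃ w : ℕ → K.S, w 0 ∈ K.I ∧ (∀ k, K.R (w k) (w (k + 1))) ∧ x = K.label ∘ w}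

/-- A language of ω-words is closed if it contains all its accumulation points. -/
def IsClosedLang {α : Type} (L : Set (ℕ → α)) : Prop :=
  ∀ w : ℕ → α, (∀ n : ℕ, ∃ v ∈ L, ∀ k < n, v k = w k) → w ∈ L

/-- A language of ω-words is ω-regular if it is recognized by some Büchi automaton. -/
def OmegaRegular {α : Type} (L : Set (ℕ → α)) : Prop :=
  ∃ A : BuchiAutomaton α, A.Lang = L

lemma aux_shift {P : ℕ → Prop} (h : {k | P k}.Infinite) (n : ℕ) :
    {k | P (k + n)}.Infinite := by
  apply Set.Infinite.of_image (f := fun k => k + n)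
  apply Set.Infinite.mono (s := {k | P k} \ Set.Iio n)
  · rintro k ⟨hk, hk2⟩
    simp only [Set.mem_Iio, not_lt] at hk2
    exact ⟨k - n, by simpa [Nat.sub_add_cancel hk2] using hk, Nat.sub_add_cancel hk2⟩
  · exact h.diff (Set.finite_Iio n)

lemma aux_ultra {ι : Type} [Finite ι] (U : Ultrafilter ℕ) (g : ℕ → ι) :
    ∃ v, {n | g n = v} ∈ U := by
  by_contra h
  push_neg at h
  have h2 : ∀ v, {n | g n = v}ᶜ ∈ U := fun v => Ultrafilter.compl_mem_iff_notMem.2 (h v)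
  have h3 : (⋂ v, {n | g n = v}ᶜ) ∈ U := Filter.iInter_mem.2 h2
  obtain ⟨n, hn⟩ := Filter.nonempty_of_mem h3
  simp only [Set.mem_iInter, Set.mem_compl_iff, Set.mem_setOf_eq] at hn
  exact hn (g n) rfl

lemma traces_closed {α : Type} (K : KripkeStructure α) : IsClosedLang K.Traces := by
  haveI := K.finS
  intro w hw
  -- for each n, choose an execution agreeing with w below n
  have h : ∀ n : ℕ, ∃ e : ℕ → K.S, e 0 ∈ K.I ∧ (∀ k, K.R (e k) (e (k + 1))) ∧
      ∀ k < n, K.label (e k) = w k := by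
    intro n
    obtain ⟨v, ⟨e, he0, heR, hev⟩, hvw⟩ := hw n
    exact ⟨e, he0, heR, fun k hk => by rw [← hvw k hk, hev]; rfl⟩
  choose e he0 heR hel using h
  set U : Ultrafilter ℕ := Filter.hyperfilter ℕ with hU
  have hcof : ∀ k : ℕ, {n | k < n} ∈ U := by
    intro k
    apply Filter.mem_hyperfilter_of_finite_compl
    have : {n | k < n}ᶜ = Set.Iic k := by ext n; simp [Set.mem_Iic]
    rw [this]; exact Set.finite_Iic k
  have hsel : ∀ k : ℕ, ∃ v : K.S, {n | e n k = v} ∈ U := fun k =>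
    aux_ultra U (fun n => e n k)
  choose s hs using hsel
  refine ⟨s, ?_, ?_, ?_⟩
  · obtain ⟨n, hn⟩ := Filter.nonempty_of_mem (hs 0)
    rw [← hn]; exact he0 n
  · intro k
    obtain ⟨n, hn1, hn2⟩ := Filter.nonempty_of_mem (Filter.inter_mem (hs k) (hs (k + 1)))
    rw [← hn1, ← hn2]; exact heR n k
  · funext k
    obtain ⟨n, hn1, hn2⟩ := Filter.nonempty_of_mem (Filter.inter_mem (hs k) (hcof k))
    simp only [Function.comp_apply]
    rw [← (hel n k hn2), hn1]

lemma traces_regular {α : Type} (K : KripkeStructure α) : OmegaRegular K.Traces := by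
  haveI := K.finS
  refine ⟨{ Q := Option K.S
            δ := fun q a => match q with
              | none => some '' {s | s ∈ K.I ∧ K.label s = a}
              | some s => some '' {s' | K.R s s' ∧ K.label s' = a}
            init := none
            F := Set.univ }, ?_⟩
  ext x
  constructor
  · rintro ⟨r, hr0, hrδ, -⟩
    -- every r (k+1) is some
    have hsome : ∀ k : ℕ, ∃ s : K.S, r (k + 1) = some s := by
      intro k
      have := hrδ k
      cases hk : r k with
      | none => rw [hk] at this; obtain ⟨s, -, hs⟩ := this; exact ⟨s, hs.symm⟩
      | some s => rw [hk] at this; obtain ⟨s', -, hs'⟩ := this; exact ⟨s', hs'.symm⟩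
    choose g hg using hsome
    have h0 : g 0 ∈ K.I ∧ K.label (g 0) = x 0 := by
      have := hrδ 0
      rw [hr0, hg 0] at this
      obtain ⟨s, hs, hss⟩ := this
      cases Option.some_injective _ hss
      exact hs
    have hstep : ∀ k, K.R (g k) (g (k + 1)) ∧ K.label (g (k + 1)) = x (k + 1) := by
      intro k
      have := hrδ (k + 1)
      rw [hg k, hg (k + 1)] at this
      obtain ⟨s, hs, hss⟩ := this
      cases Option.some_injective _ hss
      exact hs
    refine ⟨g, h0.1, fun k => (hstep k).1, ?_⟩
    funext k
    cases k with
    | zero => exact h0.2.symm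
    | succ k => exact (hstep k).2.symm
  · rintro ⟨e, he0, heR, hex⟩
    refine ⟨fun k => match k with | 0 => none | k + 1 => some (e k), rfl, ?_, ?_⟩
    · intro k
      cases k with
      | zero => exact ⟨e 0, ⟨he0, by rw [hex]; rfl⟩, rfl⟩
      | succ k => exact ⟨e (k + 1), ⟨heR k, by rw [hex]; rfl⟩, rfl⟩
    · simpa using Set.infinite_univ

lemma closed_regular_kripke {α : Type} [Fintype α] (L : Set (ℕ → α))
    (hcl : IsClosedLang L) (A : BuchiAutomaton α) (hA : A.Lang = L) :
    ∃ K : KripkeStructure α, K.Traces = L := by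
  haveI := A.finQ
  classical
  -- Good pairs: from state q there is an accepting run reading a word starting with a
  set Good : A.Q × α → Prop := fun p =>
    ∃ u : ℕ → α, ∃ ρ : ℕ → A.Q, ρ 0 = p.1 ∧ u 0 = p.2 ∧
      (∀ k, ρ (k + 1) ∈ A.δ (ρ k) (u k)) ∧ {k | ρ k ∈ A.F}.Infinite with hGood
  refine ⟨{ S := {p : A.Q × α // Good p}
            R := fun p q => q.1.1 ∈ A.δ p.1.1 p.1.2
            I := {p | p.1.1 = A.init}
            label := fun p => p.1.2 }, ?_⟩
  ext x
  constructor
  · rintro ⟨w, hw0, hwR, hwx⟩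
    -- x is a trace; use closedness
    apply hcl
    intro n
    obtain ⟨u, ρ, hρ0, hu0, hρδ, hρF⟩ := (w n).2
    set v : ℕ → α := fun k => if k < n then x k else u (k - n) with hv
    refine ⟨v, ?_, fun k hk => by simp [hv, hk]⟩
    rw [← hA]
    refine ⟨fun k => if k < n then (w k).1.1 else ρ (k - n), ?_, ?_, ?_⟩
    · by_cases h0 : 0 < n
      · simpa [h0] using hw0
      · have hn : n = 0 := by omega
        subst hn
        simp only [lt_irrefl, if_neg, Nat.sub_zero] at *
        rw [hρ0]
        exact hw0
    · intro k
      rcases lt_trichotomy (k + 1) n with h | h | h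
      · have hk : k < n := by omega
        simp only [h, if_pos, hk, hv]
        have : x k = (w k).1.2 := by rw [hwx]; rfl
        rw [this]
        exact hwR k
      · have hk : k < n := by omega
        have : ¬ (k + 1 < n) := by omega
        simp only [this, if_neg, hk, if_pos, hv, h]
        rw [if_neg (lt_irrefl n), Nat.sub_self, hρ0]
        have hxk : x k = (w k).1.2 := by rw [hwx]; rfl
        rw [hxk]
        have := hwR k
        rw [h] at this
        exact this
      · have hk : ¬ (k < n) := by omega
        have hk1 : ¬ (k + 1 < n) := by omega
        simp only [hk, hk1, if_neg, hv]
        have : k + 1 - n = (k - n) + 1 := by omega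
        rw [this]
        exact hρδ (k - n)
    · apply Set.Infinite.mono (s := (fun j => j + n) '' {j | ρ j ∈ A.F})
      · rintro k ⟨j, hj, rfl⟩
        have : ¬ (j + n < n) := by omega
        simpa [this] using hj
      · exact hρF.image (Function.Injective.injOn (fun a b => by omega))
  · intro hx
    rw [← hA] at hx
    obtain ⟨r, hr0, hrδ, hrF⟩ := hx
    have hg : ∀ k : ℕ, Good (r k, x k) := by
      intro k
      exact ⟨fun j => x (j + k), fun j => r (j + k), by simp, by simp, fun j => by
        have := hrδ (j + k)
        simpa [Nat.add_right_comm j 1 k] using this, aux_shift hrF k⟩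
    refine ⟨fun k => ⟨(r k, x k), hg k⟩, hr0, fun k => hrδ k, rfl⟩

/-- There is a finite Kripke structure whose trace language is `L` iff
`L` is closed and ω-regular. -/
theorem exists_kripke_iff_closed_omegaRegular {α : Type} [Fintype α]
    (L : Set (ℕ → α)) :
    (∃ K : KripkeStructure α, K.Traces = L) ↔ IsClosedLang L ∧ OmegaRegular L := by
  constructor
  · rintro ⟨K, rfl⟩
    exact ⟨traces_closed K, traces_regular K⟩
  · rintro ⟨hcl, A, hA⟩
    exact closed_regular_kripke L hcl A hA
end

section
/- Let Σ be a finite type and A a Büchi automaton over Σ with finite state type Q, transition function δ, initial state q₀, in which every state is accepting. Define a Kripke structure K with state type Q × Σ, initial states I = {(q, a) | q ∈ δ q₀ a}, transition relation (q, a) → (q', a') iff q' ∈ δ q a', and labeling ℓ (q, a) = a. Then the trace language of K equals L(A). -/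
/-- Given a Büchi automaton with finite alphabet and every state accepting,
the Kripke structure on `Q × α` with initial states `{(q, a) | q ∈ δ q₀ a}`,
transitions `(q, a) → (q', a')` iff `q' ∈ δ q a'`, and labeling the second
component, has the automaton's language as trace language. -/
theorem kripke_of_buchi_traces_eq_lang {α : Type} [Fintype α] {Q : Type}
    [Fintype Q] (δ : Q → α → Set Q) (q₀ : Q) :
    KripkeStructure.Traces
        ⟨Q × α, fun p p' => p'.1 ∈ δ p.1 p'.2, {p | p.1 ∈ δ q₀ p.2}, fun p => p.2⟩
      = BuchiAutomaton.Lang ⟨Q, δ, q₀, Set.univ⟩ := by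
  ext x
  constructor
  · rintro ⟨w, h0, hstep, rfl⟩
    refine ⟨fun k => Nat.rec q₀ (fun k _ => (w k).1) k, rfl, ?_, ?_⟩
    · intro k
      cases k with
      | zero => exact h0
      | succ n => exact hstep n
    · have : {k : ℕ | Nat.rec q₀ (fun k _ => (w k).1) k ∈ (Set.univ : Set Q)} = Set.univ := by
        ext k; simp
      rw [show {k : ℕ | (fun k => Nat.rec q₀ (fun k _ => (w k).1) k) k ∈ (BuchiAutomaton.mk Q δ q₀ Set.univ).F} = Set.univ from this]
      exact Set.infinite_univ
  · rintro ⟨r, h0, hstep, -⟩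
    refine ⟨fun k => (r (k + 1), x k), ?_, ?_, rfl⟩
    · show r 1 ∈ δ q₀ (x 0)
      have := hstep 0
      simp only [show (BuchiAutomaton.mk Q δ q₀ Set.univ).init = q₀ from rfl] at h0
      rw [← h0]; exact this
    · intro k; exact hstep (k + 1)
end

section
/- Let A be a Büchi automaton over an alphabet Σ with finite state type Q in which every state is accepting. Then the language L(A) is closed: it contains all of its accumulation points. -/
/-- The language of a Büchi automaton in which every state is accepting is
closed: it contains all of its accumulation points. -/
theorem buchi_lang_isClosedLang_of_all_accepting {α : Type}
    (A : BuchiAutomaton α) (hF : ∀ q, q ∈ A.F) :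
    IsClosedLang A.Lang := by
  intro w hw
  classical
  haveI := A.finQ
  choose v hvL hvw using hw
  choose f hf0 hfδ _ using hvL
  set U := Filter.hyperfilter ℕ with hU
  have hex : ∀ k : ℕ, ∃ q : A.Q, {n | f n k = q} ∈ U := by
    intro k
    have : (⋃ q ∈ (Set.univ : Set A.Q), {n | f n k = q}) ∈ U := by
      have : (⋃ q ∈ (Set.univ : Set A.Q), {n | f n k = q}) = Set.univ := by
        ext n; simp
      rw [this]; exact Filter.univ_mem
    rcases (Ultrafilter.finite_biUnion_mem_iff Set.finite_univ).mp this with ⟨q, _, hq⟩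
    exact ⟨q, hq⟩
  choose r hr using hex
  refine ⟨r, ?_, ?_, ?_⟩
  · obtain ⟨n, hn⟩ := Filter.nonempty_of_mem (hr 0)
    rw [← hn]; exact hf0 n
  · intro k
    have hbig : {n : ℕ | k + 1 ≤ n} ∈ U := by
      apply Filter.hyperfilter_le_cofinite
      rw [Filter.mem_cofinite]
      have : {n : ℕ | k + 1 ≤ n}ᶜ = {n | n < k + 1} := by ext; simp
      rw [this]; exact Set.finite_lt_nat (k+1)
    obtain ⟨n, ⟨⟨hn1, hn2⟩, hn3⟩⟩ := Filter.nonempty_of_mem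
      (Filter.inter_mem (Filter.inter_mem (hr k) (hr (k+1))) hbig)
    have := hfδ n k
    rw [hvw n k hn3, hn1, hn2] at this
    exact this
  · have : {k | r k ∈ A.F} = Set.univ := by ext k; simp [hF]
    rw [this]; exact Set.infinite_univ
end

section
/- Let S be a type, → a relation on S, H ⊆ S a set of halting states, and s₀ : S. Consider the stuttering extension transition system on the type S ⊕ {s // s ∈ H}, with transitions: inl s ⇝ inl s' iff s → s'; inl s ⇝ inr ⟨s, h⟩ for every s ∈ H; and inr ⟨s, h⟩ ⇝ inr ⟨s, h⟩; and let p : S ⊕ {s // s ∈ H} → S send inl s to s and inr ⟨s, h⟩ to s. Then the set {p ∘ ρ | ρ : ℕ → S ⊕ {s // s ∈ H}, ρ 0 = inl s₀, ∀ k, ρ k ⇝ ρ (k+1)} equals the stuttered trace set T(→, H, s₀). -/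
/-- The stuttered trace set `T(→, H, s₀)`: infinite executions from `s₀`
together with the stuttering extensions of finite executions from `s₀`
ending in `H`. -/
def StutterTraces {S : Type} (R : S → S → Prop) (H : Set S) (s₀ : S) :
    Set (ℕ → S) :=
  {w | w 0 = s₀ ∧ ∀ k, R (w k) (w (k + 1))} ∪
    {w | ∃ n : ℕ, ∃ u : Fin (n + 1) → S, u 0 = s₀ ∧
      (∀ k : Fin n, R (u k.castSucc) (u k.succ)) ∧ u (Fin.last n) ∈ H ∧
      ∀ k : ℕ, w k = if h : k ≤ n then u ⟨k, Nat.lt_succ_of_le h⟩ else u (Fin.last n)}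

/-- The transition relation of the stuttering extension on `S ⊕ {s // s ∈ H}`:
`inl s ⇝ inl s'` iff `s → s'`; `inl s ⇝ inr ⟨s, h⟩` for every `s ∈ H`; and
`inr ⟨s, h⟩ ⇝ inr ⟨s, h⟩`. -/
def stutterRel {S : Type} (R : S → S → Prop) (H : Set S) :
    S ⊕ {s // s ∈ H} → S ⊕ {s // s ∈ H} → Prop
  | Sum.inl s, Sum.inl s' => R s s'
  | Sum.inl s, Sum.inr t => s = t.1
  | Sum.inr _, Sum.inl _ => False
  | Sum.inr t, Sum.inr t' => t = t'

/-- The projection sending `inl s` and `inr ⟨s, h⟩` to `s`. -/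
def stutterProj {S : Type} (H : Set S) : S ⊕ {s // s ∈ H} → S
  | Sum.inl s => s
  | Sum.inr t => t.1

/-!
A run of the stuttering extension from `inl s₀` either stays in the left summand forever, and
then projects to an infinite execution, or it first enters the right summand at some step
`n + 1`; from then on it can only stutter at `inr ⟨w n, _⟩`, so it projects to the stuttering
extension of the finite execution `w 0, …, w n`, which ends in `H`. Conversely, both kinds of
traces lift to runs by tagging the execution with `inl` and its stuttering tail with `inr`.
-/

/-- `w` is the stuttering extension of the finite execution `w 0, …, w n` ending in `H`. -/
def StuttersFrom {S : Type} (R : S → S → Prop) (H : Set S) (w : ℕ → S) (n : ℕ) : Prop :=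
  (∀ k < n, R (w k) (w (k + 1))) ∧ w n ∈ H ∧ ∀ k, n ≤ k → w k = w n

section

variable {S : Type} {R : S → S → Prop} {H : Set S}

theorem mem_stutterTraces_iff {s₀ : S} {w : ℕ → S} :
    w ∈ StutterTraces R H s₀ ↔
      w 0 = s₀ ∧ ((∀ k, R (w k) (w (k + 1))) ∨ ∃ n, StuttersFrom R H w n) := by
  constructor
  · rintro (⟨h0, hR⟩ | ⟨n, u, hu0, hu, hH, hw⟩)
    · exact ⟨h0, Or.inl hR⟩
    have hwu : ∀ k (hk : k ≤ n), w k = u ⟨k, Nat.lt_succ_of_le hk⟩ := fun k hk => by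
      rw [hw, dif_pos hk]
    have hwn : w n = u (Fin.last n) := hwu n le_rfl
    refine ⟨(hwu 0 n.zero_le).trans hu0, Or.inr ⟨n, fun k hk => ?_, hwn ▸ hH, fun k hk => ?_⟩⟩
    · rw [hwu k hk.le, hwu (k + 1) hk]
      exact hu ⟨k, hk⟩
    · rw [hw, hwn]
      split_ifs with hkn
      · congr 1
        ext
        simp only [Fin.val_last]
        omega
      · rfl
  · rintro ⟨h0, hR | ⟨n, hR, hH, hconst⟩⟩
    · exact Or.inl ⟨h0, hR⟩
    refine Or.inr ⟨n, fun i => w i, h0, fun k => hR k k.isLt, hH, fun k => ?_⟩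
    split_ifs with hk
    · rfl
    · exact hconst k (by omega)

theorem stutterRel_inr_left_iff {t : {s // s ∈ H}} {y : S ⊕ {s // s ∈ H}} :
    stutterRel R H (Sum.inr t) y ↔ y = Sum.inr t := by
  cases y <;> simp [stutterRel, eq_comm]

theorem rel_stutterProj_of_isLeft {x y : S ⊕ {s // s ∈ H}} (h : stutterRel R H x y)
    (hy : y.isLeft) : R (stutterProj H x) (stutterProj H y) := by
  rcases x with s | t <;> rcases y with s' | t' <;> simp_all [stutterRel, stutterProj]

theorem stutterProj_eq_of_stutterRel_inr {x : S ⊕ {s // s ∈ H}} {t : {s // s ∈ H}}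
    (h : stutterRel R H x (Sum.inr t)) : stutterProj H x = t.1 := by
  rcases x with s | t' <;> simp_all [stutterRel, stutterProj]

variable {ρ : ℕ → S ⊕ {s // s ∈ H}}

theorem eq_inr_of_stutterRel_run (hρ : ∀ k, stutterRel R H (ρ k) (ρ (k + 1)))
    {m k : ℕ} {t : {s // s ∈ H}} (hm : ρ m = Sum.inr t) (hmk : m ≤ k) : ρ k = Sum.inr t := by
  induction k, hmk using Nat.le_induction with
  | base => exact hm
  | succ k _ ih => exact stutterRel_inr_left_iff.1 (ih ▸ hρ k)

theorem stutterProj_run_cases (hρ0 : (ρ 0).isLeft)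
    (hρ : ∀ k, stutterRel R H (ρ k) (ρ (k + 1))) :
    (∀ k, R (stutterProj H (ρ k)) (stutterProj H (ρ (k + 1)))) ∨
      ∃ n, StuttersFrom R H (stutterProj H ∘ ρ) n := by
  by_cases hright : ∃ k, (ρ k).isRight
  · classical
    obtain ⟨t, ht⟩ := Sum.isRight_iff.1 (Nat.find_spec hright)
    have hfind : Nat.find hright ≠ 0 := fun h0 => by
      have hρ0_right := Nat.find_spec hright
      rw [h0, ← Sum.not_isLeft] at hρ0_right
      exact hρ0_right hρ0
    obtain ⟨n, hn⟩ := Nat.exists_eq_add_one_of_ne_zero hfind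
    have hleft : ∀ k ≤ n, (ρ k).isLeft := fun k hk =>
      Sum.not_isRight.1 (Nat.find_min hright (by omega))
    have hstay : ∀ k, n + 1 ≤ k → ρ k = Sum.inr t := fun k hk =>
      eq_inr_of_stutterRel_run hρ (hn ▸ ht) hk
    have hwn : stutterProj H (ρ n) = t.1 :=
      stutterProj_eq_of_stutterRel_inr (hstay (n + 1) le_rfl ▸ hρ n)
    refine Or.inr ⟨n, fun k hk => rel_stutterProj_of_isLeft (hρ k) (hleft _ hk),
      (hwn ▸ t.2 : stutterProj H (ρ n) ∈ H), fun k hk => ?_⟩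
    rcases hk.eq_or_lt with rfl | hk
    · rfl
    · show stutterProj H (ρ k) = stutterProj H (ρ n)
      rw [hstay k hk, hwn]
      rfl
  · exact Or.inl fun k =>
      rel_stutterProj_of_isLeft (hρ k) (Sum.not_isRight.1 fun h => hright ⟨k + 1, h⟩)

theorem exists_stutterRel_run_of_stuttersFrom {w : ℕ → S} {n : ℕ}
    (hw : StuttersFrom R H w n) :
    ∃ ρ : ℕ → S ⊕ {s // s ∈ H}, ρ 0 = Sum.inl (w 0) ∧
      (∀ k, stutterRel R H (ρ k) (ρ (k + 1))) ∧ w = stutterProj H ∘ ρ := by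
  obtain ⟨hR, hH, hconst⟩ := hw
  classical
  refine ⟨fun k => if k ≤ n then Sum.inl (w k) else Sum.inr ⟨w n, hH⟩, by simp,
    fun k => ?_, funext fun k => ?_⟩
  · rcases lt_trichotomy k n with hk | rfl | hk
    · simp [hk.le, Nat.succ_le_of_lt hk, stutterRel, hR k hk]
    · simp [stutterRel]
    · simp [Nat.not_le.2 hk, Nat.not_lt.2 hk.le, stutterRel]
  · by_cases hk : k ≤ n
    · simp [hk, stutterProj]
    · simp [hk, stutterProj, hconst k (by omega)]

end

/-- The projections of the infinite executions of the stuttering extension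
starting at `inl s₀` are exactly the stuttered traces `T(→, H, s₀)`. -/
theorem stutter_extension_traces {S : Type} (R : S → S → Prop) (H : Set S)
    (s₀ : S) :
    {x : ℕ → S | ∃ ρ : ℕ → S ⊕ {s // s ∈ H},
        ρ 0 = Sum.inl s₀ ∧ (∀ k, stutterRel R H (ρ k) (ρ (k + 1))) ∧
        x = stutterProj H ∘ ρ}
      = StutterTraces R H s₀ := by
  ext w
  rw [Set.mem_ofPred_eq, mem_stutterTraces_iff]
  constructor
  · rintro ⟨ρ, h0, hρ, rfl⟩
    exact ⟨by simp [h0, stutterProj], stutterProj_run_cases (by simp [h0]) hρ⟩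
  · rintro ⟨rfl, hinf | ⟨n, hn⟩⟩
    · exact ⟨Sum.inl ∘ w, rfl, hinf, rfl⟩
    · exact exists_stutterRel_run_of_stuttersFrom hn
end

section
/- Let S be a type, → a relation on S, H ⊆ S, and s₀ : S, and suppose every state of H has no →-successor (for all s ∈ H and s' : S, ¬(s → s')). Define →' by s →' s' iff (s → s') ∨ (s = s' ∧ s ∈ H) (adding self-loops to halting states). Then the set of infinite →'-executions starting at s₀, {w : ℕ → S | w 0 = s₀ ∧ ∀ k, w k →' w (k+1)}, equals the stuttered trace set T(→, H, s₀). Thus duplicating deadlocked halting states is unnecessary: adding self-loops directly yields the stuttering extension. -/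
/-- If every halting state is deadlocked (has no `R`-successor), then adding
self-loops directly to the halting states yields the stuttering extension:
the infinite executions of the relation `R' s s' := R s s' ∨ (s = s' ∧ s ∈ H)`
starting at `s₀` are exactly the stuttered traces `T(R, H, s₀)`. -/
theorem selfloop_traces_eq_stutterTraces {S : Type} (R : S → S → Prop)
    (H : Set S) (s₀ : S) (hdead : ∀ s ∈ H, ∀ s', ¬ R s s') :
    {w : ℕ → S | w 0 = s₀ ∧
        ∀ k, R (w k) (w (k + 1)) ∨ (w k = w (k + 1) ∧ w k ∈ H)}
      = StutterTraces R H s₀ := by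
  ext w
  constructor
  · rintro ⟨h0, hstep⟩
    by_cases hall : ∀ k, R (w k) (w (k + 1))
    · exact Or.inl ⟨h0, hall⟩
    · right
      push_neg at hall
      have hex : ∃ k, ¬ R (w k) (w (k + 1)) := hall
      classical
      set n := Nat.find hex with hn
      have hnR : ¬ R (w n) (w (n + 1)) := Nat.find_spec hex
      have hmin : ∀ k < n, R (w k) (w (k + 1)) := fun k hk => by
        by_contra hc; exact absurd (Nat.find_le hc) (Nat.not_le.mpr hk)
      obtain ⟨heq, hH⟩ := (hstep n).resolve_left hnR
      have hconst : ∀ m, n ≤ m → w m = w n := by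
        intro m hm
        induction m with
        | zero =>
            have : n = 0 := Nat.le_zero.mp hm
            rw [this]
        | succ m ih =>
          rcases Nat.lt_or_ge n (m + 1) with h | h
          · have hnm : n ≤ m := Nat.lt_succ_iff.mp h
            have hwm : w m = w n := ih hnm
            have : ¬ R (w m) (w (m + 1)) := by
              rw [hwm]; exact hdead _ hH _
            obtain ⟨he, _⟩ := (hstep m).resolve_left this
            rw [← he, hwm]
          · have : n = m + 1 := le_antisymm hm h
            rw [this]
      simp only [StutterTraces, Set.mem_union, Set.mem_setOf_eq]
      refine ⟨n, fun i => w i, by simpa using h0, ?_, ?_, ?_⟩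
      · intro k
        exact hmin k k.isLt
      · simpa [Fin.last] using hH
      · intro k
        split
        · rfl
        · next h => exact hconst k (Nat.le_of_not_lt fun hk => h (Nat.le_of_lt hk)) ▸ rfl
  · intro h
    simp only [StutterTraces, Set.mem_union, Set.mem_setOf_eq] at h
    rcases h with ⟨h0, hstep⟩ | ⟨n, u, hu0, hR, hH, hw⟩
    · exact ⟨h0, fun k => Or.inl (hstep k)⟩
    · have hwge : ∀ k, n ≤ k → w k = u (Fin.last n) := by
        intro k hk
        rw [hw k]
        rcases Nat.lt_or_ge n k with h | h
        · simp [Nat.not_le.mpr h]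
        · have : k = n := le_antisymm h hk
          subst this
          simp [Fin.last]
      constructor
      · rw [hw 0]; simpa using hu0
      · intro k
        rcases Nat.lt_or_ge k n with h | h
        · left
          have h1 : w k = u ⟨k, by omega⟩ := by rw [hw k]; simp [Nat.le_of_lt h]
          have h2 : w (k + 1) = u ⟨k + 1, by omega⟩ := by rw [hw (k+1)]; simp [Nat.succ_le_of_lt h]
          rw [h1, h2]
          exact hR ⟨k, h⟩
        · right
          rw [hwge k h, hwge (k + 1) (by omega)]
          exact ⟨rfl, hH⟩
end

section
/- Let Σ be a finite type and L ⊆ (ℕ → Σ) a closed ω-regular language. Then L is accepted by a Büchi automaton over Σ in which every state is accepting. -/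
theorem Nat.infinite_setOf_add_iff {p : ℕ → Prop} (m : ℕ) :
    {k | p (k + m)}.Infinite ↔ {k | p k}.Infinite := by
  rw [← Nat.frequently_atTop_iff_infinite, ← Nat.frequently_atTop_iff_infinite,
    ← Filter.frequently_map (P := p), Filter.map_add_atTop_eq_nat]

namespace BuchiAutomaton

variable {α : Type} (A : BuchiAutomaton α)

def IsRun (w : ℕ → α) (r : ℕ → A.Q) : Prop :=
  ∀ k, r (k + 1) ∈ A.δ (r k) (w k)

def Live (q : A.Q) : Prop :=
  ∃ w r, r 0 = q ∧ A.IsRun w r ∧ {k | r k ∈ A.F}.Infinite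

variable {A}

theorem IsRun.shift {w : ℕ → α} {r : ℕ → A.Q} (hr : A.IsRun w r) (m : ℕ) :
    A.IsRun (fun k => w (k + m)) (fun k => r (k + m)) := fun k => by
  simpa only [Nat.add_right_comm k 1 m] using hr (k + m)

theorem IsRun.live {w : ℕ → α} {r : ℕ → A.Q} (hr : A.IsRun w r)
    (hacc : {k | r k ∈ A.F}.Infinite) (m : ℕ) : A.Live (r m) :=
  ⟨_, _, by simp, hr.shift m, (Nat.infinite_setOf_add_iff m).2 hacc⟩

theorem IsRun.append {w u : ℕ → α} {r s : ℕ → A.Q} (hr : A.IsRun w r) (hs : A.IsRun u s)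
    {n : ℕ} (hrs : s 0 = r n) :
    A.IsRun (fun k => if k < n then w k else u (k - n))
      (fun k => if k < n then r k else s (k - n)) := by
  intro k
  rcases lt_trichotomy (k + 1) n with hlt | heq | hgt
  · simpa [hlt, (by omega : k < n)] using hr k
  · simpa [heq, hrs, (by omega : k < n)] using hr k
  · have h1 : ¬k + 1 < n := by omega
    have h2 : ¬k < n := by omega
    have h3 : k + 1 - n = k - n + 1 := by omega
    simpa [h1, h2, h3] using hs (k - n)

theorem exists_mem_lang_eqOn_of_live {w : ℕ → α} {r : ℕ → A.Q} (hr0 : r 0 = A.init)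
    (hr : A.IsRun w r) {n : ℕ} (hlive : A.Live (r n)) :
    ∃ v ∈ A.Lang, ∀ k < n, v k = w k := by
  obtain ⟨u, s, hs0, hs, hacc⟩ := hlive
  refine ⟨_, ⟨_, ?_, hr.append hs hs0, ?_⟩, fun k hk => if_pos hk⟩
  · rcases n.eq_zero_or_pos with rfl | hn
    · simpa using hs0.trans hr0
    · simpa [hn] using hr0
  · refine (Nat.infinite_setOf_add_iff n).1 ?_
    simpa using hacc

variable (A)

def liveTrim : BuchiAutomaton α where
  Q := A.Q
  finQ := A.finQ
  δ q a := {q' | q' ∈ A.δ q a ∧ A.Live q ∧ A.Live q'}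
  init := A.init
  F := Set.univ

theorem lang_subset_lang_liveTrim : A.Lang ⊆ A.liveTrim.Lang := by
  rintro w ⟨r, hr0, hr : A.IsRun w r, hacc⟩
  exact ⟨r, hr0, fun k => ⟨hr k, hr.live hacc k, hr.live hacc (k + 1)⟩,
    Set.infinite_univ.mono fun _ _ => Set.mem_univ _⟩

theorem lang_liveTrim_subset (hclosed : IsClosedLang A.Lang) : A.liveTrim.Lang ⊆ A.Lang := by
  rintro w ⟨r, hr0, hr, -⟩
  have hrA : A.IsRun w r := fun k => (hr k).1
  exact hclosed w fun n => exists_mem_lang_eqOn_of_live (A := A) hr0 hrA (hr n).2.1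

theorem lang_liveTrim (hclosed : IsClosedLang A.Lang) : A.liveTrim.Lang = A.Lang :=
  (A.lang_liveTrim_subset hclosed).antisymm A.lang_subset_lang_liveTrim

end BuchiAutomaton

theorem closed_omegaRegular_accepted_all_states_accepting_general {α : Type}
    (L : Set (ℕ → α)) (hclosed : IsClosedLang L)
    (hreg : ∃ A : BuchiAutomaton α, A.Lang = L) :
    ∃ A : BuchiAutomaton α, (∀ q, q ∈ A.F) ∧ A.Lang = L := by
  obtain ⟨A, rfl⟩ := hreg
  exact ⟨A.liveTrim, Set.mem_univ, A.lang_liveTrim hclosed⟩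

/-- Any closed ω-regular language over a finite alphabet is accepted by a
Büchi automaton in which every state is accepting. -/
theorem closed_omegaRegular_accepted_all_states_accepting {α : Type}
    [Fintype α] (L : Set (ℕ → α)) (hclosed : IsClosedLang L)
    (hreg : ∃ A : BuchiAutomaton α, A.Lang = L) :
    ∃ A : BuchiAutomaton α, (∀ q, q ∈ A.F) ∧ A.Lang = L :=
  closed_omegaRegular_accepted_all_states_accepting_general L hclosed hreg
end
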